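/- With α := 1 - 1/√2 and (X',A',B') an independent copy of (X,A,B), there exist functions F, G : {0,1}² → {0,1}² such that P[F(A,A') = G(B,B') = (X,X')] = (1-α²)²/4 + (1-α)⁴/4, and this value strictly exceeds the square of the single-copy optimal classical simultaneous guessing probability (1/2)² = 1/4. Hence the classical simultaneous guessing probability is strictly superadditive (non-multiplicative) for P^α × P^α. -/
import Mathlib


/-- The distribution P^α: X uniform bit, A = X⊕Y, B = X⊕Z with Y,Z independent
Bernoulli(α). P(x,a,b) = (1/2)·P[Y = x⊕a]·P[Z = x⊕b]. -/
noncomputable def Palpha (α : ℝ) (x a b : ZMod 2) : ℝ :=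
  (1/2) * (if a = x then 1 - α else α) * (if b = x then 1 - α else α)

/-- Winning probability of a two-copy strategy (F,G) for the product
distribution P^α × P^α. -/
noncomputable def winProb2 (α : ℝ) (F G : ZMod 2 × ZMod 2 → ZMod 2 × ZMod 2) : ℝ :=
  ∑ x : ZMod 2 × ZMod 2, ∑ a : ZMod 2 × ZMod 2, ∑ b : ZMod 2 × ZMod 2,
    (Palpha α x.1 a.1 b.1 * Palpha α x.2 a.2 b.2) *
      (if F a = x ∧ G b = x then 1 else 0)

lemma zmod2sum (f : ZMod 2 → ℝ) : ∑ x : ZMod 2, f x = f 0 + f 1 :=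
  Fin.sum_univ_two f

lemma winProb2_eval (α : ℝ) : winProb2 α (fun a => if a = (1,1) then (1,1) else (0,0))
    (fun b => if b = (1,1) then (1,1) else (0,0)) =
    (1 - α^2)^2/4 + (1-α)^4/4 := by
  simp only [winProb2, Palpha, Fintype.sum_prod_type, zmod2sum]
  norm_num [Prod.ext_iff]
  ring

theorem superadditivity_Palpha :
    ∃ F G : ZMod 2 × ZMod 2 → ZMod 2 × ZMod 2,
      winProb2 (1 - 1/Real.sqrt 2) F G =
        (1 - (1 - 1/Real.sqrt 2)^2)^2 / 4 + (1 - (1 - 1/Real.sqrt 2))^4 / 4 ∧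
      (1 - (1 - 1/Real.sqrt 2)^2)^2 / 4 + (1 - (1 - 1/Real.sqrt 2))^4 / 4
        > (1/2 : ℝ)^2 := by
  refine ⟨_, _, winProb2_eval _, ?_⟩
  have hs : Real.sqrt 2 ^ 2 = 2 := Real.sq_sqrt (by norm_num)
  have hs1 : (1:ℝ) < Real.sqrt 2 := by
    nlinarith [Real.sqrt_nonneg 2]
  have hs2 : Real.sqrt 2 < 3/2 := by
    nlinarith [Real.sqrt_nonneg 2]
  have h0 : Real.sqrt 2 ≠ 0 := by positivity
  have key : (1 - (1 - 1/Real.sqrt 2)^2)^2 / 4 + (1 - (1 - 1/Real.sqrt 2))^4 / 4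
      = 5/8 - Real.sqrt 2 / 4 := by
    field_simp
    have hs4 : Real.sqrt 2 ^ 4 = 4 := by nlinarith [hs]
    nlinarith [hs, hs4]
  rw [key]
  nlinarith
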